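/- Let τ, γ, λ > 0, U ∈ ℝ^{p×n}, V ∈ ℝ^{p×m}, and define Ψ(W) := (τ/2)‖U − VW‖² + (γ/2)‖W‖² for W ∈ ℝ^{m×n}. If W* satisfies W* ∈ Prox_{βλ‖·‖_{0,2}}(W* − β∇Ψ(W*)) for some β ≥ 1/γ, then W* is a global minimizer of Ψ(W) + λ‖W‖_{0,2} over ℝ^{m×n}. -/

import Mathlib

/-!
`Ψ` is a quadratic whose Hessian dominates `γ • id`, so
`Ψ(W* + D) ≥ Ψ(W*) + ⟨∇Ψ(W*), D⟩ + (γ/2)‖D‖²`. Expanding the square in the proximal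
inequality at `W*` with competitor `W* + D` gives
`λ‖W*‖_{0,2} ≤ λ‖W* + D‖_{0,2} + ⟨∇Ψ(W*), D⟩ + ‖D‖²/(2β)`, and `1/(2β) ≤ γ/2`
lets the two inequalities be added.
-/

set_option autoImplicit false

open Matrix

/-- Squared Frobenius norm of a matrix. -/
noncomputable def frobSq {m n : ℕ} (W : Matrix (Fin m) (Fin n) ℝ) : ℝ :=
  ∑ i, ∑ j, (W i j) ^ 2

/-- Frobenius norm of a matrix. -/
noncomputable def frobNorm {m n : ℕ} (W : Matrix (Fin m) (Fin n) ℝ) : ℝ :=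
  Real.sqrt (frobSq W)

open Classical in
/-- `‖W‖_{0,2}`: the number of nonzero rows of `W`, as a real number. -/
noncomputable def norm02 {m n : ℕ} (W : Matrix (Fin m) (Fin n) ℝ) : ℝ :=
  ((Finset.univ.filter fun s : Fin m => W s ≠ 0).card : ℝ)

/-- The proximal operator (as a set of global minimizers):
`Prox_β G (H) = argmin_W { G(W) + (1/(2β))‖W − H‖² }`. -/
def ProxSet {m n : ℕ} (β : ℝ) (G : Matrix (Fin m) (Fin n) ℝ → ℝ)
    (H : Matrix (Fin m) (Fin n) ℝ) : Set (Matrix (Fin m) (Fin n) ℝ) :=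
  {W | ∀ Z : Matrix (Fin m) (Fin n) ℝ,
    G W + (1 / (2 * β)) * frobSq (W - H) ≤ G Z + (1 / (2 * β)) * frobSq (Z - H)}

/-- The objective `Ψ(W) = (τ/2)‖U − VW‖² + (γ/2)‖W‖²`. -/
noncomputable def Psi {p m n : ℕ} (τ γ : ℝ) (U : Matrix (Fin p) (Fin n) ℝ)
    (V : Matrix (Fin p) (Fin m) ℝ) (W : Matrix (Fin m) (Fin n) ℝ) : ℝ :=
  (τ / 2) * frobSq (U - V * W) + (γ / 2) * frobSq W

/-- The gradient of `Ψ`, namely `∇Ψ(W) = τ Vᵀ(VW − U) + γ W`. -/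
noncomputable def gradPsi {p m n : ℕ} (τ γ : ℝ) (U : Matrix (Fin p) (Fin n) ℝ)
    (V : Matrix (Fin p) (Fin m) ℝ) (W : Matrix (Fin m) (Fin n) ℝ) :
    Matrix (Fin m) (Fin n) ℝ :=
  τ • (Vᵀ * (V * W - U)) + γ • W

/-- The spectral norm `‖V‖₂` of a matrix (largest singular value): the operator norm
of the induced linear map between Euclidean spaces. -/
noncomputable def specNorm {p m : ℕ} (V : Matrix (Fin p) (Fin m) ℝ) : ℝ :=
  ‖LinearMap.toContinuousLinearMap (Matrix.toEuclideanLin V)‖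

noncomputable def frobInner {m n : ℕ} (A B : Matrix (Fin m) (Fin n) ℝ) : ℝ :=
  ∑ i, ∑ j, A i j * B i j

section Frobenius

variable {m n : ℕ}

lemma frobSq_nonneg (A : Matrix (Fin m) (Fin n) ℝ) : 0 ≤ frobSq A :=
  Finset.sum_nonneg fun _ _ => Finset.sum_nonneg fun _ _ => sq_nonneg _

lemma frobSq_neg (A : Matrix (Fin m) (Fin n) ℝ) : frobSq (-A) = frobSq A := by
  simp only [frobSq, Matrix.neg_apply, neg_sq]

lemma frobSq_add (A B : Matrix (Fin m) (Fin n) ℝ) :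
    frobSq (A + B) = frobSq A + 2 * frobInner A B + frobSq B := by
  simp only [frobSq, frobInner, Matrix.add_apply, Finset.mul_sum, ← Finset.sum_add_distrib]
  exact Finset.sum_congr rfl fun _ _ => Finset.sum_congr rfl fun _ _ => by ring

lemma frobSq_smul (c : ℝ) (A : Matrix (Fin m) (Fin n) ℝ) :
    frobSq (c • A) = c ^ 2 * frobSq A := by
  simp only [frobSq, Matrix.smul_apply, smul_eq_mul, Finset.mul_sum, mul_pow]

lemma frobInner_add_left (A B C : Matrix (Fin m) (Fin n) ℝ) :
    frobInner (A + B) C = frobInner A C + frobInner B C := by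
  simp only [frobInner, Matrix.add_apply, add_mul, Finset.sum_add_distrib]

lemma frobInner_smul_left (c : ℝ) (A B : Matrix (Fin m) (Fin n) ℝ) :
    frobInner (c • A) B = c * frobInner A B := by
  simp only [frobInner, Matrix.smul_apply, smul_eq_mul, Finset.mul_sum, mul_assoc]

lemma frobInner_eq_trace (A B : Matrix (Fin m) (Fin n) ℝ) :
    frobInner A B = trace (Aᵀ * B) := by
  simp only [frobInner, trace, diag, mul_apply, transpose_apply]
  exact Finset.sum_comm

lemma frobInner_transpose_mul_left {p : ℕ} (V : Matrix (Fin p) (Fin m) ℝ)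
    (X : Matrix (Fin p) (Fin n) ℝ) (D : Matrix (Fin m) (Fin n) ℝ) :
    frobInner (Vᵀ * X) D = frobInner X (V * D) := by
  rw [frobInner_eq_trace, frobInner_eq_trace, transpose_mul, transpose_transpose, Matrix.mul_assoc]

end Frobenius

section Psi

variable {p m n : ℕ} {τ γ : ℝ} {U : Matrix (Fin p) (Fin n) ℝ} {V : Matrix (Fin p) (Fin m) ℝ}

lemma Psi_add (W D : Matrix (Fin m) (Fin n) ℝ) :
    Psi τ γ U V (W + D) = Psi τ γ U V W + frobInner (gradPsi τ γ U V W) D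
      + (τ / 2) * frobSq (V * D) + (γ / 2) * frobSq D := by
  have hres : U - V * (W + D) = -((V * W - U) + V * D) := by rw [Matrix.mul_add]; abel
  have hres' : U - V * W = -(V * W - U) := (neg_sub _ _).symm
  rw [Psi, Psi, hres, hres', frobSq_neg, frobSq_neg, frobSq_add, frobSq_add, gradPsi,
    frobInner_add_left, frobInner_smul_left, frobInner_smul_left, frobInner_transpose_mul_left]
  ring

lemma Psi_add_ge (hτ : 0 ≤ τ) (W D : Matrix (Fin m) (Fin n) ℝ) :
    Psi τ γ U V W + frobInner (gradPsi τ γ U V W) D + (γ / 2) * frobSq D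
      ≤ Psi τ γ U V (W + D) := by
  rw [Psi_add]
  linarith [mul_nonneg (div_nonneg hτ zero_le_two) (frobSq_nonneg (V * D))]

end Psi

lemma le_add_of_mem_proxSet {m n : ℕ} {β : ℝ} (hβ : 0 < β) {G : Matrix (Fin m) (Fin n) ℝ → ℝ}
    {X g : Matrix (Fin m) (Fin n) ℝ} (hX : X ∈ ProxSet β G (X - β • g))
    (D : Matrix (Fin m) (Fin n) ℝ) :
    G X ≤ G (X + D) + frobInner g D + (1 / (2 * β)) * frobSq D := by
  have h := hX (X + D)
  rw [sub_sub_cancel, show X + D - (X - β • g) = β • g + D by abel, frobSq_add,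
    frobInner_smul_left, frobSq_smul] at h
  have hexpand : 1 / (2 * β) * (β ^ 2 * frobSq g + 2 * (β * frobInner g D) + frobSq D)
      = 1 / (2 * β) * (β ^ 2 * frobSq g) + frobInner g D + 1 / (2 * β) * frobSq D := by
    field_simp
  linarith

theorem pStationary_is_global_minimizer_general
    (p m n : ℕ) (τ γ lam β : ℝ) (hτ : 0 < τ) (hγ : 0 < γ)
    (hβ : β ≥ 1 / γ)
    (U : Matrix (Fin p) (Fin n) ℝ) (V : Matrix (Fin p) (Fin m) ℝ)
    (Wstar : Matrix (Fin m) (Fin n) ℝ)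
    (hP : Wstar ∈ ProxSet β (fun W => lam * norm02 W)
        (Wstar - β • gradPsi τ γ U V Wstar)) :
    ∀ W : Matrix (Fin m) (Fin n) ℝ,
      Psi τ γ U V Wstar + lam * norm02 Wstar ≤ Psi τ γ U V W + lam * norm02 W := by
  intro W
  have hβpos : 0 < β := lt_of_lt_of_le (by positivity) hβ
  have hcoef : 1 / (2 * β) ≤ γ / 2 := by
    rw [div_le_div_iff₀ (by positivity) two_pos]
    nlinarith [(div_le_iff₀ hγ).mp hβ]
  obtain ⟨D, rfl⟩ : ∃ D, W = Wstar + D := ⟨W - Wstar, by abel⟩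
  have hprox := le_add_of_mem_proxSet hβpos hP D
  have hquad := Psi_add_ge (γ := γ) (U := U) (V := V) hτ.le Wstar D
  linarith [mul_le_mul_of_nonneg_right hcoef (frobSq_nonneg D)]

/-- a P-stationary point `W*` of `Ψ(W) + λ‖W‖_{0,2}` with `β ≥ 1/γ` is
a global minimizer of `Ψ(W) + λ‖W‖_{0,2}` over `ℝ^{m×n}`. -/
theorem pStationary_is_global_minimizer
    (p m n : ℕ) (τ γ lam β : ℝ) (hτ : 0 < τ) (hγ : 0 < γ) (hlam : 0 < lam)
    (hβ : β ≥ 1 / γ)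
    (U : Matrix (Fin p) (Fin n) ℝ) (V : Matrix (Fin p) (Fin m) ℝ)
    (Wstar : Matrix (Fin m) (Fin n) ℝ)
    (hP : Wstar ∈ ProxSet β (fun W => lam * norm02 W)
        (Wstar - β • gradPsi τ γ U V Wstar)) :
    ∀ W : Matrix (Fin m) (Fin n) ℝ,
      Psi τ γ U V Wstar + lam * norm02 Wstar ≤ Psi τ γ U V W + lam * norm02 W :=
  pStationary_is_global_minimizer_general p m n τ γ lam β hτ hγ hβ U V Wstar hP
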